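/- arXiv:2212.02120 — 4 statements merged into one kernel-verified Lean document; each statement's English description precedes it below -/
import Mathlib

section
/- Let C(X,Y) = c₀X³+c₁X²Y+c₂XY²+c₃Y³ be the Cardano covariant of a binary cubic, i.e., C = (G + 3δg)/2 where δ² = −3Δ. Then 27c₀²·C(X,Y) = (3c₀X + c₁Y)³ holds identically. -/
/-- `27c₀²·C(X,Y) = (3c₀X + c₁Y)³` where `C = (G + 3δg)/2` is the Cardano
covariant of the binary cubic `g = aX³+bX²Y+cXY²+dY³`, over the resolvent
algebra `L` with `δ² = −3Δ`. -/
theorem cardano_cube_identity {L : Type*} [Field L]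
    (h2 : (2:L) ≠ 0) (h3 : (3:L) ≠ 0)
    (a b c d Δ δ : L)
    (hΔ : Δ = b^2*c^2 - 4*a*c^3 - 4*b^3*d - 27*a^2*d^2 + 18*a*b*c*d)
    (hδ : δ^2 = -3*Δ)
    (g G C : L → L → L) (c₀ c₁ : L)
    (hg : ∀ X Y, g X Y = a*X^3 + b*X^2*Y + c*X*Y^2 + d*Y^3)
    (hG : ∀ X Y, G X Y = (2*b^3 + 27*a^2*d - 9*a*b*c)*X^3 + 3*(b^2*c + 9*a*b*d - 6*a*c^2)*X^2*Y
        - 3*(b*c^2 + 9*a*c*d - 6*b^2*d)*X*Y^2 - (2*c^3 + 27*a*d^2 - 9*b*c*d)*Y^3)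
    (hC : ∀ X Y, C X Y = (G X Y + 3*δ*(g X Y))/2)
    (hc₀ : c₀ = ((2*b^3 + 27*a^2*d - 9*a*b*c) + 3*a*δ)/2)
    (hc₁ : c₁ = (3/2)*(b^2*c - 6*a*c^2 + 9*a*b*d + b*δ)) :
    ∀ X Y, 27*c₀^2 * C X Y = (3*c₀*X + c₁*Y)^3 := by
  intro X Y
  subst hΔ
  have h8 : (8:L) ≠ 0 := by
    have h : (8:L) = 2^3 := by norm_num
    rw [h]; exact pow_ne_zero 3 h2
  have hc₀' : 2*c₀ = (2*b^3 + 27*a^2*d - 9*a*b*c) + 3*a*δ := by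
    rw [hc₀]; field_simp
  have hc₁' : 2*c₁ = 3*(b^2*c - 6*a*c^2 + 9*a*b*d + b*δ) := by
    rw [hc₁]; field_simp
  have hC' : 2 * C X Y = G X Y + 3*δ*(g X Y) := by
    rw [hC]; field_simp
  apply mul_left_cancel₀ h8
  linear_combination 108*c₀^2 * hC' + 108*c₀^2 * (hG X Y) + 324*c₀^2*δ*(hg X Y) + (-9*X*Y^2*(2*c₁)^2 + -27*X^2*Y*(2*c₀)*(2*c₁) + -27*X^3*(2*c₀)^2 + 81*d*Y^3*δ*(2*c₀) + 81*c*X*Y^2*δ*(2*c₀) + -54*c^3*Y^3*(2*c₀) + 81*b*X^2*Y*δ*(2*c₀) + 243*b*c*d*Y^3*(2*c₀) + -81*b*c^2*X*Y^2*(2*c₀) + 486*b^2*d*X*Y^2*(2*c₀) + 81*b^2*c*X^2*Y*(2*c₀) + -54*b^3*X^2*Y*(2*c₁) + 162*b^3*d*Y^3*δ + 162*b^3*c*X*Y^2*δ + -108*b^3*c^3*Y^3 + 162*b^4*X^2*Y*δ + 486*b^4*c*d*Y^3 + -162*b^4*c^2*X*Y^2 + 972*b^5*d*X*Y^2 + 162*b^5*c*X^2*Y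 + -81*a*X^2*Y*δ*(2*c₁) + 243*a*d*Y^3*δ^2 + -729*a*d^2*Y^3*(2*c₀) + 243*a*c*X*Y^2*δ^2 + -729*a*c*d*X*Y^2*(2*c₀) + -486*a*c^2*X^2*Y*(2*c₀) + -162*a*c^3*Y^3*δ + 243*a*b*X^2*Y*δ^2 + 729*a*b*d*X^2*Y*(2*c₀) + 243*a*b*c*X^2*Y*(2*c₁) + -972*a*b*c^2*X*Y^2*δ + 486*a*b*c^4*Y^3 + 1458*a*b^2*d*X*Y^2*δ + -486*a*b^2*c*X^2*Y*δ + -2187*a*b^2*c^2*d*Y^3 + 729*a*b^2*c^3*X*Y^2 + -1458*a*b^3*d^2*Y^3 + -5832*a*b^3*c*d*X*Y^2 + -1701*a*b^3*c^2*X^2*Y + 1458*a*b^4*d*X^2*Y + -729*a^2*d*X^2*Y*(2*c₁) + -1458*a^2*c^2*X^2*Y*δ + -1458*a^2*c^3*d*Y^3 + 4374*a^2*b*d*X^2*Y*δ + 13122*a^2*b*c*d^2*Y^3 + 4374*a^2*b*c^2*d*X*Y^2 + 4374*a^2*b*c^3*X^2*Y + 13122*a^2*b^2*d^2*X*Y^2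 + -4374*a^2*b^2*c*d*X^2*Y + -19683*a^3*d^3*Y^3 + -19683*a^3*c*d^2*X*Y^2 + -13122*a^3*c^2*d*X^2*Y + 19683*a^3*b*d^2*X^2*Y) * hc₀' + (-1*Y^3*(2*c₁)^2 + -3*b*Y^3*δ*(2*c₁) + -9*b^2*Y^3*δ^2 + -3*b^2*c*Y^3*(2*c₁) + -18*b^3*X*Y^2*(2*c₁) + -18*b^3*c*Y^3*δ + -54*b^4*X*Y^2*δ + -9*b^4*c^2*Y^3 + -54*b^5*c*X*Y^2 + -108*b^6*X^2*Y + -27*a*X*Y^2*δ*(2*c₁) + 18*a*c^2*Y^3*(2*c₁) + -81*a*b*X*Y^2*δ^2 + -27*a*b*d*Y^3*(2*c₁) + 81*a*b*c*X*Y^2*(2*c₁) + 108*a*b*c^2*Y^3*δ + -162*a*b^2*d*Y^3*δ + 162*a*b^2*c*X*Y^2*δ + 108*a*b^2*c^3*Y^3 + -324*a*b^3*X^2*Y*δ + -162*a*b^3*c*d*Y^3 + 567*a*b^3*c^2*X*Y^2 + -486*a*b^4*d*X*Y^2 + 972*a*b^4*c*X^2*Y + -243*a^2*X^2*Y*δ^2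 + -243*a^2*d*X*Y^2*(2*c₁) + 486*a^2*c^2*X*Y^2*δ + -324*a^2*c^4*Y^3 + -1458*a^2*b*d*X*Y^2*δ + 1458*a^2*b*c*X^2*Y*δ + 972*a^2*b*c^2*d*Y^3 + -1458*a^2*b*c^3*X*Y^2 + -729*a^2*b^2*d^2*Y^3 + 1458*a^2*b^2*c*d*X*Y^2 + -2187*a^2*b^2*c^2*X^2*Y + -2916*a^2*b^3*d*X^2*Y + -4374*a^3*d*X^2*Y*δ + 4374*a^3*c^2*d*X*Y^2 + -6561*a^3*b*d^2*X*Y^2 + 13122*a^3*b*c*d*X^2*Y + -19683*a^4*d^2*X^2*Y) * hc₁' + (-27*b^3*Y^3*δ + -81*b^4*c*Y^3 + -162*b^5*X*Y^2 + -243*a*b^2*X*Y^2*δ + 486*a*b^2*c^2*Y^3 + 243*a*b^3*d*Y^3 + 1215*a*b^3*c*X*Y^2 + 729*a^2*d*Y^3*δ + 729*a^2*c*X*Y^2*δ + -486*a^2*c^3*Y^3 + -2187*a^2*b*c*d*Y^3 + -2187*a^2*b*c^2*X*Y^2 + -2187*a^2*b^2*d*X*Y^2 + 6561*a^3*d^2*Y^3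 + 6561*a^3*c*d*X*Y^2) * hδ
end

section
/- With C the Cardano covariant of a binary cubic g, the identity C(X₁,Y₁)²·C(X₂,Y₂) = F(X₁,Y₁,X₂,Y₂)³ holds, where 3F(X₁,Y₁,X₂,Y₂) = (3c₀X₁² + 2c₁X₁Y₁ + c₂Y₁²)X₂ + (c₁X₁² + 2c₂X₁Y₁ + 3c₃Y₁²)Y₂ and C = c₀X³+c₁X²Y+c₂XY²+c₃Y³. -/
/-- Identity `C(X₁,Y₁)²·C(X₂,Y₂) = F(X₁,Y₁,X₂,Y₂)³` for the Cardano covariant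
`C = (G+3δg)/2 = c₀X³+c₁X²Y+c₂XY²+c₃Y³` of a binary cubic, where
`3F = (3c₀X₁²+2c₁X₁Y₁+c₂Y₁²)X₂ + (c₁X₁²+2c₂X₁Y₁+3c₃Y₁²)Y₂`. -/
theorem cardano_bicubic_identity {L : Type*} [Field L]
    (h2 : (2:L) ≠ 0) (h3 : (3:L) ≠ 0)
    (a b c d Δ δ : L)
    (hΔ : Δ = b^2*c^2 - 4*a*c^3 - 4*b^3*d - 27*a^2*d^2 + 18*a*b*c*d)
    (hδ : δ^2 = -3*Δ)
    (c₀ c₁ c₂ c₃ : L)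
    (hc₀ : c₀ = ((2*b^3 + 27*a^2*d - 9*a*b*c) + 3*δ*a)/2)
    (hc₁ : c₁ = (3*(b^2*c + 9*a*b*d - 6*a*c^2) + 3*δ*b)/2)
    (hc₂ : c₂ = (-3*(b*c^2 + 9*a*c*d - 6*b^2*d) + 3*δ*c)/2)
    (hc₃ : c₃ = (-(2*c^3 + 27*a*d^2 - 9*b*c*d) + 3*δ*d)/2)
    (C : L → L → L)
    (hC : ∀ X Y, C X Y = c₀*X^3 + c₁*X^2*Y + c₂*X*Y^2 + c₃*Y^3)
    (F : L → L → L → L → L)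
    (hF : ∀ X₁ Y₁ X₂ Y₂, F X₁ Y₁ X₂ Y₂ =
        ((3*c₀*X₁^2 + 2*c₁*X₁*Y₁ + c₂*Y₁^2)*X₂ + (c₁*X₁^2 + 2*c₂*X₁*Y₁ + 3*c₃*Y₁^2)*Y₂)/3) :
    ∀ X₁ Y₁ X₂ Y₂, (C X₁ Y₁)^2 * C X₂ Y₂ = (F X₁ Y₁ X₂ Y₂)^3 := by
  subst hΔ
  have e₀ : 2*c₀ = (2*b^3 + 27*a^2*d - 9*a*b*c) + 3*δ*a := by rw [hc₀]; field_simp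
  have e₁ : 2*c₁ = 3*(b^2*c + 9*a*b*d - 6*a*c^2) + 3*δ*b := by rw [hc₁]; field_simp
  have e₂ : 2*c₂ = -3*(b*c^2 + 9*a*c*d - 6*b^2*d) + 3*δ*c := by rw [hc₂]; field_simp
  have e₃ : 2*c₃ = -(2*c^3 + 27*a*d^2 - 9*b*c*d) + 3*δ*d := by rw [hc₃]; field_simp
  have h4 : (4:L) ≠ 0 := by
    rw [show (4:L) = 2*2 by norm_num]; exact mul_ne_zero h2 h2
  have h1 : c₁^2 = 3*c₀*c₂ := by
    apply mul_left_cancel₀ h4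
    linear_combination (2*c₁ + (3*(b^2*c + 9*a*b*d - 6*a*c^2) + 3*δ*b)) * e₁
      - (6*c₂) * e₀ - (3*((2*b^3 + 27*a^2*d - 9*a*b*c) + 3*δ*a)) * e₂
      + (9*(b^2-3*a*c)) * hδ
  have h2' : c₂^2 = 3*c₁*c₃ := by
    apply mul_left_cancel₀ h4
    linear_combination (2*c₂ + (-3*(b*c^2 + 9*a*c*d - 6*b^2*d) + 3*δ*c)) * e₂
      - (6*c₃) * e₁ - (3*(3*(b^2*c + 9*a*b*d - 6*a*c^2) + 3*δ*b)) * e₃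
      + (9*(c^2-3*b*d)) * hδ
  have h3' : c₁*c₂ = 9*c₀*c₃ := by
    apply mul_left_cancel₀ h4
    linear_combination (2*c₂) * e₁
      + (3*(b^2*c + 9*a*b*d - 6*a*c^2) + 3*δ*b) * e₂
      - (18*c₃) * e₀ - (9*((2*b^3 + 27*a^2*d - 9*a*b*c) + 3*δ*a)) * e₃
      + (9*(b*c-9*a*d)) * hδ
  intro X₁ Y₁ X₂ Y₂
  rw [hC X₁ Y₁, hC X₂ Y₂, hF X₁ Y₁ X₂ Y₂, div_pow,
    eq_div_iff (pow_ne_zero 3 h3)]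
  linear_combination
    (-c₁*X₁^6*Y₂^3 - 6*c₁*X₁^5*Y₁*X₂*Y₂^2 + 15*c₁*X₁^4*Y₁^2*X₂^2*Y₂ - 8*c₁*X₁^3*Y₁^3*X₂^3
      - 6*c₂*X₁^5*Y₁*Y₂^3 + 18*c₂*X₁^3*Y₁^3*X₂^2*Y₂ - 12*c₂*X₁^2*Y₁^4*X₂^3
      - 9*c₀*X₁^6*X₂*Y₂^2 + 18*c₀*X₁^5*Y₁*X₂^2*Y₂ - 9*c₀*X₁^4*Y₁^2*X₂^3
      + 18*c₃*X₁^4*Y₁^2*Y₂^3 - 36*c₃*X₁^3*Y₁^3*X₂*Y₂^2 + 18*c₃*X₁^2*Y₁^4*X₂^2*Y₂) * h1 +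
    (-8*c₂*X₁^3*Y₁^3*Y₂^3 + 15*c₂*X₁^2*Y₁^4*X₂*Y₂^2 - 6*c₂*X₁*Y₁^5*X₂^2*Y₂ - c₂*Y₁^6*X₂^3
      - 18*c₀*X₁^5*Y₁*Y₂^3 + 18*c₀*X₁^4*Y₁^2*X₂*Y₂^2 + 18*c₀*X₁^3*Y₁^3*X₂^2*Y₂ - 18*c₀*X₁^2*Y₁^4*X₂^3
      - 9*c₃*X₁^2*Y₁^4*Y₂^3 + 18*c₃*X₁*Y₁^5*X₂*Y₂^2 - 9*c₃*Y₁^6*X₂^2*Y₂) * h2' +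
    (-12*c₂*X₁^4*Y₁^2*Y₂^3 + 18*c₂*X₁^3*Y₁^3*X₂*Y₂^2 - 6*c₂*X₁*Y₁^5*X₂^3
      - 3*c₀*X₁^6*Y₂^3 + 9*c₀*X₁^4*Y₁^2*X₂^2*Y₂ - 6*c₀*X₁^3*Y₁^3*X₂^3
      - 6*c₃*X₁^3*Y₁^3*Y₂^3 + 9*c₃*X₁^2*Y₁^4*X₂*Y₂^2 - 3*c₃*Y₁^6*X₂^3) * h3'
end

section
/- The norm of the Cardano covariant is the cube of the Hessian: N_{L/K}(C(X,Y)) = C(X,Y)·C̄(X,Y) = H(X,Y)³, where C̄ is obtained from C by δ ↦ −δ. -/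
/-- The norm of the Cardano covariant is the cube of the Hessian:
`C(X,Y)·C̄(X,Y) = H(X,Y)³`, where `C = (G+3δg)/2` and `C̄ = (G−3δg)/2`. -/
theorem cardano_norm_eq_hessian_cube {L : Type*} [Field L]
    (h2 : (2:L) ≠ 0) (h3 : (3:L) ≠ 0)
    (a b c d Δ δ : L)
    (hΔ : Δ = b^2*c^2 - 4*a*c^3 - 4*b^3*d - 27*a^2*d^2 + 18*a*b*c*d)
    (hδ : δ^2 = -3*Δ)
    (g H G C Cbar : L → L → L)
    (hg : ∀ X Y, g X Y = a*X^3 + b*X^2*Y + c*X*Y^2 + d*Y^3)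
    (hH : ∀ X Y, H X Y = (b^2 - 3*a*c)*X^2 + (b*c - 9*a*d)*X*Y + (c^2 - 3*b*d)*Y^2)
    (hG : ∀ X Y, G X Y = (2*b^3 + 27*a^2*d - 9*a*b*c)*X^3 + 3*(b^2*c + 9*a*b*d - 6*a*c^2)*X^2*Y
        - 3*(b*c^2 + 9*a*c*d - 6*b^2*d)*X*Y^2 - (2*c^3 + 27*a*d^2 - 9*b*c*d)*Y^3)
    (hC : ∀ X Y, C X Y = (G X Y + 3*δ*(g X Y))/2)
    (hCbar : ∀ X Y, Cbar X Y = (G X Y + 3*(-δ)*(g X Y))/2) :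
    ∀ X Y, C X Y * Cbar X Y = (H X Y)^3 := by
  intro X Y
  subst hΔ
  rw [hC, hCbar, hG, hg, hH]
  field_simp
  linear_combination (-9*(a*X^3+b*X^2*Y+c*X*Y^2+d*Y^3)^2) * hδ
end

section
/- Let g be a binary cubic over K with nonzero discriminant and with leading coefficient a ≠ 0, seminvariants P, U, and δ² = −3Δ. Then the equations (x+yδ)³ = (U+3aδ)/2 together with x²+3Δy² = P have a solution x,y ∈ K if and only if the cubic f(X) = 8X³ − 6PX − U has a root in K; moreover f(X) = a⁻¹g(2X+b, −3a), so this holds if and only if g has a linear factor over K. -/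
/-!
Over `L = K[δ]` write `(x + yδ)³ = (x³ - 9Δxy²) + (3x²y - 3Δy³)δ`. Comparing coordinates in the
basis `1, δ`, and using the norm equation `3Δy² = P - x²`, the first coordinate turns
`2(x + yδ)³ = U + 3aδ` into `8x³ - 6Px = U`, and the second into `2y(4x² - P) = 3a`. Conversely,
a root `x` of `8X³ - 6PX - U` determines `y = 3a / (2(4x² - P))`; the denominator is nonzero
because of the syzygy `4P³ - U² = 27a²Δ`, which at such a root reads
`4(P - x²)(4x² - P)² = 27a²Δ`. Finally `8X³ - 6PX - U` is, up to the factor `-27a²`, the cubic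
`g(·, 1)` after the affine substitution `e = -(2X + b) / (3a)`.
-/

open Polynomial

/-- Discriminant of the binary cubic `aX³+bX²Y+cXY²+dY³`. -/
def cubicDisc {K : Type*} [CommRing K] (a b c d : K) : K :=
  b^2*c^2 - 4*a*c^3 - 4*b^3*d - 27*a^2*d^2 + 18*a*b*c*d

/-- The defining polynomial `T² + 3Δ` of the resolvent algebra `L = K[δ]`. -/
noncomputable def resPoly {K : Type*} [CommRing K] (Δ : K) : Polynomial K :=
  X^2 + C (3*Δ)

theorem cubicDisc_syzygy {R : Type*} [CommRing R] (a b c d : R) :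
    27 * a ^ 2 * cubicDisc a b c d
      = 4 * (b ^ 2 - 3 * a * c) ^ 3 - (2 * b ^ 3 + 27 * a ^ 2 * d - 9 * a * b * c) ^ 2 := by
  unfold cubicDisc
  ring

section CardanoCubic

variable {K : Type*} [Field K] {a b c d P U : K}

theorem cardano_cubic_eq_inv_mul (ha : a ≠ 0) (hP : P = b ^ 2 - 3 * a * c)
    (hU : U = 2 * b ^ 3 + 27 * a ^ 2 * d - 9 * a * b * c) (x : K) :
    8 * x ^ 3 - 6 * P * x - U
      = a⁻¹ * (a * (2 * x + b) ^ 3 + b * (2 * x + b) ^ 2 * (-3 * a)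
          + c * (2 * x + b) * (-3 * a) ^ 2 + d * (-3 * a) ^ 3) := by
  subst hP hU
  field_simp
  ring

theorem cardano_cubic_eq_mul_eval (h3 : (3 : K) ≠ 0) (ha : a ≠ 0) (hP : P = b ^ 2 - 3 * a * c)
    (hU : U = 2 * b ^ 3 + 27 * a ^ 2 * d - 9 * a * b * c) (x : K) :
    a * (8 * x ^ 3 - 6 * P * x - U)
      = (-3 * a) ^ 3 * (a * (-(2 * x + b) / (3 * a)) ^ 3 + b * (-(2 * x + b) / (3 * a)) ^ 2
          + c * (-(2 * x + b) / (3 * a)) + d) := by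
  subst hP hU
  field_simp
  ring

theorem exists_cardano_root_iff (h2 : (2 : K) ≠ 0) (h3 : (3 : K) ≠ 0) (ha : a ≠ 0)
    (hP : P = b ^ 2 - 3 * a * c) (hU : U = 2 * b ^ 3 + 27 * a ^ 2 * d - 9 * a * b * c) :
    (∃ x : K, 8 * x ^ 3 - 6 * P * x - U = 0) ↔ ∃ e : K, a * e ^ 3 + b * e ^ 2 + c * e + d = 0 := by
  have hroot (x : K) : 8 * x ^ 3 - 6 * P * x - U = 0 ↔
      a * (-(2 * x + b) / (3 * a)) ^ 3 + b * (-(2 * x + b) / (3 * a)) ^ 2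
        + c * (-(2 * x + b) / (3 * a)) + d = 0 := by
    rw [← mul_right_inj' ha, mul_zero, cardano_cubic_eq_mul_eval h3 ha hP hU,
      mul_eq_zero_iff_left (pow_ne_zero 3 (by simp [h3, ha]))]
  constructor
  · rintro ⟨x, hx⟩
    exact ⟨_, (hroot x).1 hx⟩
  · rintro ⟨e, he⟩
    refine ⟨(-3 * a * e - b) / 2, (hroot _).2 ?_⟩
    have hsubst : -(2 * ((-3 * a * e - b) / 2) + b) / (3 * a) = e := by
      field_simp
      ring
    rwa [hsubst]

end CardanoCubic

namespace AdjoinRoot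

variable {R : Type*} [CommRing R] [Nontrivial R] {g : R[X]}

theorem modByMonicHom_algebraMap_add_mul_root (hg : g.Monic) (hdeg : 1 < g.natDegree)
    (c₀ c₁ : R) :
    modByMonicHom hg (algebraMap R (AdjoinRoot g) c₀ + algebraMap R (AdjoinRoot g) c₁ * root g)
      = C c₁ * X + C c₀ := by
  have hmk : algebraMap R (AdjoinRoot g) c₀ + algebraMap R (AdjoinRoot g) c₁ * root g
      = mk g (C c₁ * X + C c₀) := by
    rw [map_add, map_mul, mk_C, mk_X, add_comm, algebraMap_eq]
    rfl
  rw [hmk, modByMonicHom_mk, (modByMonic_eq_self_iff hg).2]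
  rw [degree_eq_natDegree hg.ne_zero]
  exact degree_linear_le.trans_lt (by exact_mod_cast hdeg)

theorem algebraMap_add_mul_root_inj (hg : g.Monic) (hdeg : 1 < g.natDegree) {c₀ c₁ d₀ d₁ : R} :
    algebraMap R (AdjoinRoot g) c₀ + algebraMap R (AdjoinRoot g) c₁ * root g
        = algebraMap R (AdjoinRoot g) d₀ + algebraMap R (AdjoinRoot g) d₁ * root g ↔
      c₀ = d₀ ∧ c₁ = d₁ := by
  refine ⟨fun h => ?_, fun ⟨h₀, h₁⟩ => h₀ ▸ h₁ ▸ rfl⟩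
  have h' := congrArg (modByMonicHom hg) h
  simp only [modByMonicHom_algebraMap_add_mul_root hg hdeg] at h'
  exact ⟨by simpa using congrArg (coeff · 0) h', by simpa using congrArg (coeff · 1) h'⟩

end AdjoinRoot

section Resolvent

variable {R : Type*} [CommRing R] (Δ : R)

local notation "L" => AdjoinRoot (resPoly Δ)
local notation "δ" => AdjoinRoot.root (resPoly Δ)

theorem resPoly_monic : (resPoly Δ).Monic :=
  monic_X_pow_add_C _ two_ne_zero

theorem resPoly_natDegree [Nontrivial R] : (resPoly Δ).natDegree = 2 :=
  natDegree_X_pow_add_C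

theorem root_resPoly_sq : δ ^ 2 = algebraMap R L (-3 * Δ) := by
  have h : AdjoinRoot.mk (resPoly Δ) (X ^ 2 + C (3 * Δ)) = 0 := AdjoinRoot.mk_self
  rw [map_add, map_pow, AdjoinRoot.mk_X, AdjoinRoot.mk_C] at h
  rw [AdjoinRoot.algebraMap_eq, neg_mul, map_neg]
  exact eq_neg_of_add_eq_zero_left h

theorem algebraMap_add_mul_root_resPoly_cube (x y : R) :
    (algebraMap R L x + algebraMap R L y * δ) ^ 3
      = algebraMap R L (x ^ 3 - 9 * Δ * x * y ^ 2)
        + algebraMap R L (3 * x ^ 2 * y - 3 * Δ * y ^ 3) * δ := by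
  have hδ := root_resPoly_sq Δ
  simp only [map_sub, map_mul, map_pow, map_neg, map_ofNat] at hδ ⊢
  linear_combination (3 * algebraMap R L x * algebraMap R L y ^ 2
    + algebraMap R L y ^ 3 * δ) * hδ

theorem two_mul_cube_eq_iff [Nontrivial R] (x y u v : R) :
    2 * (algebraMap R L x + algebraMap R L y * δ) ^ 3 = algebraMap R L u + algebraMap R L v * δ ↔
      2 * (x ^ 3 - 9 * Δ * x * y ^ 2) = u ∧ 2 * (3 * x ^ 2 * y - 3 * Δ * y ^ 3) = v := by
  rw [← AdjoinRoot.algebraMap_add_mul_root_inj (resPoly_monic Δ)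
    (by rw [resPoly_natDegree]; norm_num), algebraMap_add_mul_root_resPoly_cube]
  rw [mul_add, ← mul_assoc, ← map_ofNat (algebraMap R L) 2, ← map_mul, ← map_mul]

end Resolvent

theorem exists_resolvent_coords_iff {K : Type*} [Field K] {a Δ P U : K}
    (hsyz : 27 * a ^ 2 * Δ = 4 * P ^ 3 - U ^ 2) (hne : 27 * a ^ 2 * Δ ≠ 0) :
    (∃ x y : K, (2 * (x ^ 3 - 9 * Δ * x * y ^ 2) = U ∧ 2 * (3 * x ^ 2 * y - 3 * Δ * y ^ 3) = 3 * a)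
        ∧ x ^ 2 + 3 * Δ * y ^ 2 = P) ↔
      ∃ x : K, 8 * x ^ 3 - 6 * P * x - U = 0 := by
  constructor
  · rintro ⟨x, y, ⟨hU, -⟩, hN⟩
    exact ⟨x, by linear_combination 6 * x * hN + hU⟩
  · rintro ⟨x, hx⟩
    have hnorm : 4 * (P - x ^ 2) * (4 * x ^ 2 - P) ^ 2 = 27 * a ^ 2 * Δ := by
      linear_combination -hsyz - (U + 8 * x ^ 3 - 6 * P * x) * hx
    have hden : 2 * (4 * x ^ 2 - P) ≠ 0 := by
      intro h0
      apply hne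
      rw [← hnorm]
      linear_combination 2 * (P - x ^ 2) * (4 * x ^ 2 - P) * h0
    set y := 3 * a / (2 * (4 * x ^ 2 - P))
    have hy : y * (2 * (4 * x ^ 2 - P)) = 3 * a := div_mul_cancel₀ _ hden
    have hN : x ^ 2 + 3 * Δ * y ^ 2 = P := by
      have h := mul_right_cancel₀ (pow_ne_zero 2 hden)
        (show 3 * Δ * y ^ 2 * (2 * (4 * x ^ 2 - P)) ^ 2 = (P - x ^ 2) * (2 * (4 * x ^ 2 - P)) ^ 2 by
          linear_combination 3 * Δ * (y * (2 * (4 * x ^ 2 - P)) + 3 * a) * hy - hnorm)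
      linear_combination h
    exact ⟨x, y, ⟨by linear_combination -6 * x * hN + hx, by linear_combination -2 * y * hN + hy⟩, hN⟩

/-- For a binary cubic `g = aX³+bX²Y+cXY²+dY³` over `K` with `a ≠ 0` and
nonzero discriminant `Δ`, seminvariants `P`, `U`, and `L = K[δ] = K[T]/(T²+3Δ)`
with `δ² = −3Δ`: the equations `(x+yδ)³ = (U+3aδ)/2` (written multiplied by 2)
and `x²+3Δy² = P` have a solution `x,y ∈ K` iff `f(X) = 8X³−6PX−U` has a root
in `K`; moreover `f(X) = a⁻¹·g(2X+b,−3a)`, so this holds iff `g` has a linear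
factor over `K` (equivalently `g(·,1)` has a root in `K`). -/
theorem cardano_linear_factor_criterion {K : Type*} [Field K]
    (h2 : (2:K) ≠ 0) (h3 : (3:K) ≠ 0)
    (a b c d Δ P U : K) (ha : a ≠ 0)
    (hΔdef : Δ = cubicDisc a b c d) (hΔ : Δ ≠ 0)
    (hP : P = b^2 - 3*a*c) (hU : U = 2*b^3 + 27*a^2*d - 9*a*b*c) :
    (∀ x : K, 8*x^3 - 6*P*x - U
        = a⁻¹ * (a*(2*x+b)^3 + b*(2*x+b)^2*(-3*a) + c*(2*x+b)*(-3*a)^2 + d*(-3*a)^3))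
    ∧ ((∃ x y : K,
          2*(algebraMap K (AdjoinRoot (resPoly Δ)) x
              + algebraMap K (AdjoinRoot (resPoly Δ)) y * AdjoinRoot.root (resPoly Δ))^3
            = algebraMap K (AdjoinRoot (resPoly Δ)) U
              + 3*algebraMap K (AdjoinRoot (resPoly Δ)) a * AdjoinRoot.root (resPoly Δ)
          ∧ x^2 + 3*Δ*y^2 = P)
        ↔ (∃ x : K, 8*x^3 - 6*P*x - U = 0))
    ∧ ((∃ x : K, 8*x^3 - 6*P*x - U = 0) ↔ (∃ e : K, a*e^3 + b*e^2 + c*e + d = 0)) := by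
  have hsyz : 27 * a ^ 2 * Δ = 4 * P ^ 3 - U ^ 2 := by
    rw [hΔdef, hP, hU]
    exact cubicDisc_syzygy a b c d
  have hne : 27 * a ^ 2 * Δ ≠ 0 := by
    have h27 : (27 : K) = 3 ^ 3 := by norm_num
    rw [h27]
    exact mul_ne_zero (mul_ne_zero (pow_ne_zero 3 h3) (pow_ne_zero 2 ha)) hΔ
  refine ⟨cardano_cubic_eq_inv_mul ha hP hU, ?_, exists_cardano_root_iff h2 h3 ha hP hU⟩
  simp only [← map_ofNat (algebraMap K (AdjoinRoot (resPoly Δ))) 3, ← map_mul, two_mul_cube_eq_iff]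
  exact exists_resolvent_coords_iff hsyz hne
end
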